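/- Let C be a shortest even hole of a graph G, let u and v be distinct vertices of C, let the uv-path P of G be a C-shallow worst C-shortcut, and let C1, C2 be the uv-paths of C with ‖C1‖ < ‖C2‖. Let x (respectively, y) be the neighbor of u (respectively, v) in C1, and let C3 be the xy-path of C1. Then every xy-path P_xy of G satisfies ‖C3‖ ≤ ‖P_xy‖. -/

import Mathlib

open SimpleGraph

variable {V : Type*}

/-- The vertex set of a walk. -/
def suppSet {G : SimpleGraph V} {u v : V} (w : G.Walk u v) : Set V :=
  {x | x ∈ w.support}

/-- An induced cycle of `G`. -/
def IsInducedCycle (G : SimpleGraph V) {r : V} (w : G.Walk r r) : Prop :=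
  w.IsCycle ∧ ∀ a b : V, a ∈ w.support → b ∈ w.support → G.Adj a b → s(a, b) ∈ w.edges

/-- A hole of `G`: an induced cycle with at least 4 vertices. -/
def IsHole (G : SimpleGraph V) {r : V} (w : G.Walk r r) : Prop :=
  IsInducedCycle G w ∧ 4 ≤ w.length

/-- An even hole of `G`. -/
def IsEvenHole (G : SimpleGraph V) {r : V} (w : G.Walk r r) : Prop :=
  IsHole G w ∧ Even w.length

/-- A shortest even hole of `G`. -/
def IsShortestEvenHole (G : SimpleGraph V) {r : V} (w : G.Walk r r) : Prop :=
  IsEvenHole G w ∧ ∀ (y : V) (w' : G.Walk y y), IsEvenHole G w' → w.length ≤ w'.length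

/-- `P` is a path of `G` all of whose edges lie on the walk `c`
(used for "a `uv`-path of `C`"). -/
def IsPathOf (G : SimpleGraph V) {p q u v : V} (c : G.Walk p q) (P : G.Walk u v) : Prop :=
  P.IsPath ∧ ∀ e ∈ P.edges, e ∈ c.edges

/-- The distance `d_C(u,v)` between `u` and `v` within the cycle `c`. -/
noncomputable def cycleDist (G : SimpleGraph V) {r : V} (c : G.Walk r r) (u v : V) : ℕ :=
  sInf {n | ∃ P : G.Walk u v, IsPathOf G c P ∧ P.length = n}

/-- The induced subgraph `G[S]` is a hole of `G`. -/
def IsHoleOn (G : SimpleGraph V) (S : Set V) : Prop :=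
  ∃ (r : V) (w : G.Walk r r), IsHole G w ∧ suppSet w = S

/-- The induced subgraph `G[S]` is an even hole of `G`. -/
def IsEvenHoleOn (G : SimpleGraph V) (S : Set V) : Prop :=
  ∃ (r : V) (w : G.Walk r r), IsEvenHole G w ∧ suppSet w = S

/-- The induced subgraph `G[S]` is a shortest even hole of `G`. -/
def IsShortestEvenHoleOn (G : SimpleGraph V) (S : Set V) : Prop :=
  ∃ (r : V) (w : G.Walk r r), IsShortestEvenHole G w ∧ suppSet w = S

/-- `P` is `C`-good: the union of `P` and one of the two `uv`-paths of `C`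
is again a shortest even hole of `G`. -/
def CGood (G : SimpleGraph V) {r u v : V} (c : G.Walk r r) (P : G.Walk u v) : Prop :=
  ∃ Q : G.Walk u v, IsPathOf G c Q ∧ IsShortestEvenHoleOn G (suppSet P ∪ suppSet Q)

/-- The standing assumptions for `C`-shortcuts: `P` is a `uv`-path of `G` for distinct
nonadjacent vertices `u`, `v` of `C`. -/
def ShortcutSetup (G : SimpleGraph V) {r u v : V} (c : G.Walk r r) (P : G.Walk u v) : Prop :=
  P.IsPath ∧ u ≠ v ∧ ¬G.Adj u v ∧ u ∈ c.support ∧ v ∈ c.support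

/-- `P` is a `C`-shortcut: `2 ≤ ‖P‖ ≤ d_C(u,v)` and `‖P‖ < ‖C‖/4`. -/
def CShortcut (G : SimpleGraph V) {r u v : V} (c : G.Walk r r) (P : G.Walk u v) : Prop :=
  2 ≤ P.length ∧ P.length ≤ cycleDist G c u v ∧ 4 * P.length < c.length

/-- `C1` and `C2` are the two `uv`-paths of the cycle `c`. -/
def ArcPair (G : SimpleGraph V) {r u v : V} (c : G.Walk r r) (C1 C2 : G.Walk u v) : Prop :=
  IsPathOf G c C1 ∧ IsPathOf G c C2 ∧ C1.length + C2.length = c.length ∧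
    ∀ e ∈ c.edges, e ∈ C1.edges ∨ e ∈ C2.edges

/-- `P` is `C`-shallow: `‖P‖ ≥ d_C(u,v) − 1` and `G[P ∪ C2]` is a hole, where `C2` is the
longer of the two `uv`-paths of `C`. -/
def CShallow (G : SimpleGraph V) {r u v : V} (c : G.Walk r r) (P : G.Walk u v) : Prop :=
  cycleDist G c u v - 1 ≤ P.length ∧
    ∀ C1 C2 : G.Walk u v, ArcPair G c C1 C2 → C1.length ≤ C2.length →
      IsHoleOn G (suppSet P ∪ suppSet C2)

/-- `P` is a worst `C`-shortcut. -/
def WorstCShortcut (G : SimpleGraph V) {r u v : V} (c : G.Walk r r) (P : G.Walk u v) : Prop :=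
  ShortcutSetup G c P ∧ CShortcut G c P ∧ ¬CGood G c P ∧
    ∀ (u' v' : V) (P' : G.Walk u' v'),
      ShortcutSetup G c P' → CShortcut G c P' → ¬CGood G c P' →
        (P.length < P'.length ∨
          (P.length = P'.length ∧ cycleDist G c u' v' ≤ cycleDist G c u v))

/-- `C` is good in `G`: every `C`-shortcut is `C`-good. -/
def GoodHole (G : SimpleGraph V) {r : V} (c : G.Walk r r) : Prop :=
  ∀ (u v : V) (P : G.Walk u v), ShortcutSetup G c P → CShortcut G c P → CGood G c P

/-- `P` is a shortest `uv`-path of `G`. -/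
def IsShortestPath (G : SimpleGraph V) {u v : V} (P : G.Walk u v) : Prop :=
  P.IsPath ∧ ∀ Q : G.Walk u v, P.length ≤ Q.length

/-- The closed neighborhood `N_G[S]` of a vertex set `S`. -/
def closedNbhd (G : SimpleGraph V) (S : Set V) : Set V :=
  S ∪ {x | ∃ y ∈ S, G.Adj y x}

/-- The subgraph of `G` induced on `S` (kept on the same vertex type: edges of `G`
with both ends in `S`). -/
def restrictTo (G : SimpleGraph V) (S : Set V) : SimpleGraph V where
  Adj a b := G.Adj a b ∧ a ∈ S ∧ b ∈ S
  symm := ⟨fun a b h => ⟨h.1.symm, h.2.2, h.2.1⟩⟩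
  loopless := ⟨fun a h => G.loopless.irrefl a h.1⟩

/-- The vertex set of `H(u,v,x,y) = G[(V(G) \ N_G[V(P_uv ∪ P_xy) \ {u,v}]) ∪ {u,v}]`. -/
def Hverts (G : SimpleGraph V) {u v a b : V} (Puv : G.Walk u v) (Pxy : G.Walk a b) : Set V :=
  (Set.univ \ closedNbhd G ((suppSet Puv ∪ suppSet Pxy) \ {u, v})) ∪ {u, v}

/-- The graph `H(u,v,x,y)`. -/
def Hgraph (G : SimpleGraph V) {u v a b : V} (Puv : G.Walk u v) (Pxy : G.Walk a b) :
    SimpleGraph V :=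
  restrictTo G (Hverts G Puv Pxy)

/-- `G` is shallow. -/
def ShallowGraph (G : SimpleGraph V) : Prop :=
  ∃ (r : V) (c : G.Walk r r), IsShortestEvenHole G c ∧
    ∀ (u v : V) (P : G.Walk u v), WorstCShortcut G c P → CShallow G c P

/-- `G` is anti-shallow. -/
def AntiShallowGraph (G : SimpleGraph V) : Prop :=
  ∀ (r : V) (c : G.Walk r r), IsShortestEvenHole G c → ¬GoodHole G c →
    ∀ (u v : V) (P : G.Walk u v), WorstCShortcut G c P → ¬CShallow G c P

/-- The induced subgraph `G[S]` is a path with end-vertices `u` and `v`. -/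
def IsInducedPathOn (G : SimpleGraph V) (u v : V) (S : Set V) : Prop :=
  ∃ Q : G.Walk u v, Q.IsPath ∧ suppSet Q = S ∧
    ∀ a b : V, a ∈ S → b ∈ S → G.Adj a b → s(a, b) ∈ Q.edges

/-
If an `xy`-path `Pxy` were shorter than `C3`, it would be a `C`-bad `C`-shortcut strictly shorter
than `P`, against the choice of `P` as a worst `C`-shortcut: shallowness gives
`‖P‖ ≥ d_C(u,v) - 1 = ‖C1‖ - 1 = ‖C3‖ + 1`. It is a shortcut since `d_C(x,y) = ‖C3‖`, and it is bad
since its union with any `xy`-path of `C` has fewer than `‖C‖` vertices.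
All distances along `C` come from one fact: two paths of a cycle with the same ends have equal or
complementary edge sets, because their symmetric difference has even degree at every vertex, and
the only such edge sets of a cycle are `∅` and the whole cycle (every vertex of a cycle meets
exactly two of its edges, so membership propagates around it).
-/

open Finset
open scoped symmDiff

namespace Finset

variable {α : Type*} [DecidableEq α]

theorem filter_symmDiff (p : α → Prop) [DecidablePred p] (s t : Finset α) :
    {a ∈ s ∆ t | p a} = {a ∈ s | p a} ∆ {a ∈ t | p a} := by
  ext a
  simp only [mem_filter, mem_symmDiff]
  tauto

theorem card_symmDiff_add_two_mul_card_inter (s t : Finset α) :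
    #(s ∆ t) + 2 * #(s ∩ t) = #s + #t := by
  rw [Finset.symmDiff_def, card_union_of_disjoint disjoint_sdiff_sdiff]
  have hs := card_sdiff_add_card_inter s t
  have ht := card_sdiff_add_card_inter t s
  rw [inter_comm] at ht
  omega

theorem even_card_symmDiff_iff (s t : Finset α) : Even #(s ∆ t) ↔ (Even #s ↔ Even #t) := by
  have h := card_symmDiff_add_two_mul_card_inter s t
  rw [← Nat.even_add, ← h]
  simp [Nat.even_add]

end Finset

namespace SimpleGraph.Walk

variable {G : SimpleGraph V} [DecidableEq V] {u v : V}

theorem IsTrail.card_edges_toFinset {p : G.Walk u v} (hp : p.IsTrail) :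
    #p.edges.toFinset = p.length := by
  rw [List.toFinset_card_of_nodup hp.edges_nodup, length_edges]

theorem IsTrail.even_card_incident_iff {p : G.Walk u v} (hp : p.IsTrail) (x : V) :
    Even #{e ∈ p.edges.toFinset | x ∈ e} ↔ (u ≠ v → x ≠ u ∧ x ≠ v) := by
  rw [← hp.even_countP_edges_iff x, List.countP_eq_length_filter,
    ← List.toFinset_card_of_nodup (hp.edges_nodup.filter _), List.toFinset_filter]
  simp

theorem card_incident_eq_ncard_neighborSet (p : G.Walk u v) (w : V) :
    #{e ∈ p.edges.toFinset | w ∈ e} = (p.toSubgraph.neighborSet w).ncard := by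
  have hinj : Function.Injective (fun x => s(w, x)) := fun _ _ h => Sym2.congr_right.mp h
  rw [← Set.ncard_coe_finset, ← Set.ncard_image_of_injective _ hinj]
  congr 1
  ext e
  induction e using Sym2.ind with
  | _ a b =>
    simp only [coe_filter, List.mem_toFinset, Set.mem_ofPred_eq, Set.mem_image,
      Subgraph.mem_neighborSet, adj_toSubgraph_iff_mem_edges, Sym2.eq_iff, Sym2.mem_iff]
    constructor
    · rintro ⟨he, rfl | rfl⟩
      exacts [⟨b, he, .inl ⟨rfl, rfl⟩⟩, ⟨a, Sym2.eq_swap ▸ he, .inr ⟨rfl, rfl⟩⟩]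
    · rintro ⟨x, hx, ⟨rfl, rfl⟩ | ⟨rfl, rfl⟩⟩
      exacts [⟨hx, .inl rfl⟩, ⟨Sym2.eq_swap ▸ hx, .inr rfl⟩]

variable {r : V} {c : G.Walk r r}

theorem IsCycle.incident_eq_pair_of_dartAdj (hc : c.IsCycle) {d d' : G.Dart} (hd : d ∈ c.darts)
    (hd' : d' ∈ c.darts) (hadj : G.DartAdj d d') (hne : d.edge ≠ d'.edge) :
    {e ∈ c.edges.toFinset | d.snd ∈ e} = {d.edge, d'.edge} := by
  have hmem : ∀ d'' ∈ c.darts, d''.edge ∈ c.edges.toFinset := fun d'' h =>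
    List.mem_toFinset.mpr (by rw [edges_eq_map_darts]; exact List.mem_map_of_mem h)
  refine (eq_of_subset_of_card_le ?_ ?_).symm
  · refine insert_subset (mem_filter.mpr ⟨hmem d hd, Sym2.mem_mk_right _ _⟩) ?_
    exact singleton_subset_iff.mpr (mem_filter.mpr ⟨hmem d' hd', hadj ▸ Sym2.mem_mk_left _ _⟩)
  · rw [card_incident_eq_ncard_neighborSet, hc.ncard_neighborSet_toSubgraph_eq_two
      (c.dart_snd_mem_support_of_mem_darts hd), card_pair hne]

theorem IsCycle.mem_iff_mem_of_dartAdj (hc : c.IsCycle) {S : Finset (Sym2 V)}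
    (hS : S ⊆ c.edges.toFinset) (heven : ∀ w, Even #{e ∈ S | w ∈ e}) {d d' : G.Dart}
    (hd : d ∈ c.darts) (hd' : d' ∈ c.darts) (hadj : G.DartAdj d d') :
    d.edge ∈ S ↔ d'.edge ∈ S := by
  by_cases hne : d.edge = d'.edge
  · rw [hne]
  have hinc := hc.incident_eq_pair_of_dartAdj hd hd' hadj hne
  have hSw : {e ∈ S | d.snd ∈ e} = {e ∈ ({d.edge, d'.edge} : Finset _) | e ∈ S} := by
    rw [← hinc]
    ext e
    simp only [mem_filter]
    constructor
    · rintro ⟨heS, hw⟩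
      exact ⟨⟨hS heS, hw⟩, heS⟩
    · rintro ⟨⟨_, hw⟩, heS⟩
      exact ⟨heS, hw⟩
  have h := heven d.snd
  rw [hSw, filter_insert, filter_singleton] at h
  by_cases h1 : d.edge ∈ S <;> by_cases h2 : d'.edge ∈ S <;> simp_all

theorem IsCycle.eq_empty_or_eq_edges_of_even (hc : c.IsCycle) {S : Finset (Sym2 V)}
    (hS : S ⊆ c.edges.toFinset) (heven : ∀ w, Even #{e ∈ S | w ∈ e}) :
    S = ∅ ∨ S = c.edges.toFinset := by
  refine S.eq_empty_or_nonempty.imp id fun ⟨e₀, he₀⟩ => (hS.antisymm fun e he => ?_)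
  have hdart : ∀ e ∈ c.edges.toFinset, ∃ d ∈ c.darts, d.edge = e := fun e he =>
    List.mem_map.mp (by rw [← edges_eq_map_darts]; exact List.mem_toFinset.mp he)
  obtain ⟨d₀, hd₀, rfl⟩ := hdart e₀ (hS he₀)
  obtain ⟨d, hd, rfl⟩ := hdart e he
  have hne : c.darts ≠ [] := List.ne_nil_of_mem hd₀
  have hchain : c.darts.IsChain (fun d d' => d.edge ∈ S ↔ d'.edge ∈ S) :=
    c.isChain_dartAdj_darts.imp_of_mem_imp fun _ _ h h' hadj =>
      hc.mem_iff_mem_of_dartAdj hS heven h h' hadj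
  have hall := hchain.induction (fun d => d.edge ∈ S ↔ (c.darts.head hne).edge ∈ S) _
    (fun _ _ hxy hx => hxy.symm.trans hx) (fun _ => Iff.rfl)
  exact (hall d hd).mpr ((hall d₀ hd₀).mp he₀)

end SimpleGraph.Walk

open SimpleGraph.Walk

section

variable {G : SimpleGraph V} {r u v a b x y : V}

theorem SimpleGraph.Walk.IsCycle.length_eq_or_add_length_eq {c : G.Walk r r} (hc : c.IsCycle)
    {A Q : G.Walk a b} (hA : IsPathOf G c A) (hQ : IsPathOf G c Q) :
    Q.length = A.length ∨ Q.length + A.length = c.length := by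
  classical
  have hsub : ∀ {p : G.Walk a b}, IsPathOf G c p → p.edges.toFinset ⊆ c.edges.toFinset :=
    fun hp e he => List.mem_toFinset.mpr (hp.2 e (List.mem_toFinset.mp he))
  have heven (w : V) : Even #{e ∈ A.edges.toFinset ∆ Q.edges.toFinset | w ∈ e} := by
    rw [filter_symmDiff, even_card_symmDiff_iff, hA.1.isTrail.even_card_incident_iff,
      hQ.1.isTrail.even_card_incident_iff]
  rcases hc.eq_empty_or_eq_edges_of_even
    (symmDiff_subset_union.trans (union_subset (hsub hA) (hsub hQ))) heven with h | h
  · left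
    rw [← hA.1.isTrail.card_edges_toFinset, ← hQ.1.isTrail.card_edges_toFinset,
      symmDiff_eq_empty.mp h]
  · right
    have hdisj : Disjoint A.edges.toFinset Q.edges.toFinset := by
      refine Finset.disjoint_left.mpr fun e heA heQ => ?_
      have : e ∈ A.edges.toFinset ∆ Q.edges.toFinset := h ▸ hsub hA heA
      simp [mem_symmDiff, heA, heQ] at this
    rw [← hA.1.isTrail.card_edges_toFinset, ← hQ.1.isTrail.card_edges_toFinset,
      ← hc.isTrail.card_edges_toFinset, ← h, symmDiff_eq_union hdisj,
      card_union_of_disjoint hdisj, add_comm]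

theorem IsPathOf.trans {p q : V} {c : G.Walk r r} {A : G.Walk p q} {B : G.Walk x y}
    (hB : IsPathOf G A B) (hA : IsPathOf G c A) : IsPathOf G c B :=
  ⟨hB.1, fun e he => hA.2 e (hB.2 e he)⟩

theorem isPathOf_reverse_iff {p q : V} {c : G.Walk p q} {B : G.Walk x y} :
    IsPathOf G c.reverse B ↔ IsPathOf G c B := by
  simp [IsPathOf, edges_reverse]

theorem IsPathOf.support_subset {p q : V} {c : G.Walk p q} {A : G.Walk a b}
    (hA : IsPathOf G c A) (hnil : ¬A.Nil) : ∀ w ∈ A.support, w ∈ c.support := by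
  intro w hw
  obtain ⟨e, he, hwe⟩ := (mem_support_iff_exists_mem_edges_of_not_nil hnil).mp hw
  exact mem_support_of_mem_edges (hA.2 e he) hwe

theorem IsPathOf.start_notMem_support {A : G.Walk u v} (hA : A.IsPath) {B : G.Walk x y}
    (hB : IsPathOf G A B) (hx : u ≠ x) (hy : u ≠ y) : u ∉ B.support := by
  intro hu
  obtain ⟨i, rfl, hi⟩ := mem_support_iff_exists_getVert.mp hu
  have hi0 : i ≠ 0 := by rintro rfl; simp at hx
  have hil : i < B.length := lt_of_le_of_ne hi (by rintro rfl; simp at hy)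
  have hsub : B.toSubgraph.neighborSet (B.getVert i) ⊆ {A.snd} := fun z hz =>
    (hA.snd_of_toSubgraph_adj (adj_toSubgraph_iff_mem_edges.mpr
      (hB.2 _ (adj_toSubgraph_iff_mem_edges.mp hz)))).symm
  have := Set.ncard_le_ncard hsub (Set.finite_singleton _)
  rw [hB.1.ncard_neighborSet_toSubgraph_internal_eq_two hi0 hil, Set.ncard_singleton] at this
  omega

theorem IsPathOf.length_add_two_le {A : G.Walk u v} (hA : A.IsPath) (huv : u ≠ v)
    (hx : s(u, x) ∈ A.edges) (hy : s(v, y) ∈ A.edges) (huy : u ≠ y) (hvx : v ≠ x)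
    {B : G.Walk x y} (hB : IsPathOf G A B) : B.length + 2 ≤ A.length := by
  classical
  have hu := hB.start_notMem_support hA (A.adj_of_mem_edges hx).ne huy
  have hv := (isPathOf_reverse_iff.mpr hB).start_notMem_support hA.reverse hvx
    (A.adj_of_mem_edges hy).ne
  have hne : s(u, x) ≠ s(v, y) := by simp [huv, huy]
  have hpair : ({s(u, x), s(v, y)} : Finset (Sym2 V)) ⊆ A.edges.toFinset := by
    simp [insert_subset_iff, hx, hy]
  have hBA : B.edges.toFinset ⊆ A.edges.toFinset \ {s(u, x), s(v, y)} := by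
    intro e he
    have he := List.mem_toFinset.mp he
    simp only [mem_sdiff, List.mem_toFinset, hB.2 e he, mem_insert, mem_singleton, true_and]
    rintro (rfl | rfl)
    exacts [hu (B.fst_mem_support_of_mem_edges he), hv (B.fst_mem_support_of_mem_edges he)]
  have := card_le_card hBA
  rw [card_sdiff_of_subset hpair, card_pair hne, hB.1.isTrail.card_edges_toFinset,
    hA.isTrail.card_edges_toFinset] at this
  have := card_le_card hpair
  rw [card_pair hne, hA.isTrail.card_edges_toFinset] at this
  omega

theorem cycleDist_eq_length {c : G.Walk r r} (hc : c.IsCycle) {A : G.Walk a b}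
    (hA : IsPathOf G c A) (h2A : 2 * A.length ≤ c.length) : cycleDist G c a b = A.length := by
  refine le_antisymm (Nat.sInf_le ⟨A, hA, rfl⟩) (le_csInf ⟨_, A, hA, rfl⟩ ?_)
  rintro _ ⟨Q, hQ, rfl⟩
  rcases hc.length_eq_or_add_length_eq hA hQ with h | h <;> omega

theorem IsInducedCycle.not_adj_of_isPathOf {c : G.Walk r r} (hc : IsInducedCycle G c)
    {A : G.Walk a b} (hA : IsPathOf G c A) (h2 : 2 ≤ A.length) (hlt : A.length + 2 ≤ c.length) :
    ¬G.Adj a b := by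
  intro hadj
  have hnil : ¬A.Nil := not_nil_iff_lt_length.mpr (by omega)
  have hedge : IsPathOf G c hadj.toWalk :=
    ⟨IsPath.of_adj hadj, by
      simpa using hc.2 a b (hA.support_subset hnil a A.start_mem_support)
        (hA.support_subset hnil b A.end_mem_support) hadj⟩
  rcases hc.1.length_eq_or_add_length_eq hA hedge with h | h <;> simp at h <;> omega

theorem suppSet_eq_coe_toFinset [DecidableEq V] (p : G.Walk a b) :
    suppSet p = ↑p.support.toFinset := by
  ext; simp [suppSet]

theorem ncard_suppSet_le (p : G.Walk a b) : (suppSet p).ncard ≤ p.length + 1 := by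
  classical
  rw [suppSet_eq_coe_toFinset, Set.ncard_coe_finset, ← length_support]
  exact List.toFinset_card_le _

theorem finite_suppSet (p : G.Walk a b) : (suppSet p).Finite := by
  classical
  rw [suppSet_eq_coe_toFinset]
  exact Finset.finite_toSet _

theorem SimpleGraph.Walk.IsCycle.ncard_suppSet {c : G.Walk r r} (hc : c.IsCycle) :
    (suppSet c).ncard = c.length := by
  classical
  have htail : suppSet c = ↑c.support.tail.toFinset := by
    rw [suppSet_eq_coe_toFinset]
    conv_lhs => rw [← c.cons_tail_support]
    rw [List.toFinset_cons,
      insert_eq_of_mem (List.mem_toFinset.mpr (c.end_mem_tail_support hc.not_nil))]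
  rw [htail, Set.ncard_coe_finset, List.toFinset_card_of_nodup hc.support_nodup,
    List.length_tail, length_support, Nat.add_sub_cancel]

theorem ncard_suppSet_union_le (P Q : G.Walk a b) (hab : a ≠ b) :
    (suppSet P ∪ suppSet Q).ncard ≤ P.length + Q.length := by
  have hinter : 2 ≤ (suppSet P ∩ suppSet Q).ncard := by
    rw [← Set.ncard_pair hab]
    refine Set.ncard_le_ncard ?_ ((finite_suppSet P).inter_of_left _)
    simp [Set.insert_subset_iff, suppSet]
  have := Set.ncard_union_add_ncard_inter (suppSet P) (suppSet Q)
    (finite_suppSet P) (finite_suppSet Q)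
  have := ncard_suppSet_le P
  have := ncard_suppSet_le Q
  omega

theorem IsShortestEvenHole.not_isShortestEvenHoleOn_union {c : G.Walk r r}
    (hC : IsShortestEvenHole G c) {P Q : G.Walk a b} (hab : a ≠ b)
    (hlen : P.length + Q.length < c.length) :
    ¬IsShortestEvenHoleOn G (suppSet P ∪ suppSet Q) := by
  rintro ⟨_, w, hw, hsupp⟩
  have hwc : w.length = c.length := le_antisymm (hw.2 _ _ hC.1) (hC.2 _ _ hw.1)
  have := hw.1.1.1.1.ncard_suppSet
  rw [hsupp] at this
  have := ncard_suppSet_union_le P Q hab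
  omega

theorem IsShortestEvenHole.not_cGood {c : G.Walk r r} (hC : IsShortestEvenHole G c)
    {A P : G.Walk a b} (hA : IsPathOf G c A) (h2A : 2 * A.length ≤ c.length) (hab : a ≠ b)
    (hP : P.length < A.length) : ¬CGood G c P := by
  rintro ⟨Q, hQ, hhole⟩
  refine hC.not_isShortestEvenHoleOn_union hab ?_ hhole
  rcases hC.1.1.1.1.length_eq_or_add_length_eq hA hQ with h | h <;> omega

end

theorem stmt4 (G : SimpleGraph V) {r u v : V} (c : G.Walk r r)
    (hC : IsShortestEvenHole G c) (P : G.Walk u v)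
    (hworst : WorstCShortcut G c P) (hshallow : CShallow G c P)
    (C1 C2 : G.Walk u v) (harc : ArcPair G c C1 C2) (hlt : C1.length < C2.length)
    (x y : V) (hx : s(u, x) ∈ C1.edges) (hy : s(v, y) ∈ C1.edges)
    (C3 : G.Walk x y) (hC3 : IsPathOf G C1 C3) :
    ∀ Pxy : G.Walk x y, Pxy.IsPath → C3.length ≤ Pxy.length := by
  intro Pxy hPxy
  by_contra! hshort
  obtain ⟨⟨-, huv, hnadj, -, -⟩, ⟨-, -, hP4⟩, -, hPworst⟩ := hworst
  obtain ⟨hC1, -, hsum, -⟩ := harc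
  have hcyc : c.IsCycle := hC.1.1.1.1
  have hC3c : IsPathOf G c C3 := hC3.trans hC1
  have hC3C1 : C3.length + 2 ≤ C1.length :=
    hC3.length_add_two_le hC1.1 huv hx hy
      (by rintro rfl; exact hnadj (C1.adj_of_mem_edges hy).symm)
      (by rintro rfl; exact hnadj (C1.adj_of_mem_edges hx))
  have hxy : x ≠ y := by
    rintro rfl
    have := length_eq_zero_iff.mpr (isPath_iff_nil.mp hC3.1)
    omega
  have hPxy0 : Pxy.length ≠ 0 := fun h => hxy (eq_of_length_eq_zero h)
  have hnadjxy : ¬G.Adj x y := hC.1.1.1.not_adj_of_isPathOf hC3c (by omega) (by omega)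
  have hPxy1 : Pxy.length ≠ 1 := fun h => hnadjxy (adj_of_length_eq_one h)
  have hduv := cycleDist_eq_length hcyc hC1 (by omega)
  have hdxy := cycleDist_eq_length hcyc hC3c (by omega)
  have hnil : ¬C3.Nil := not_nil_iff_lt_length.mpr (by omega)
  have hsetup : ShortcutSetup G c Pxy :=
    ⟨hPxy, hxy, hnadjxy, hC3c.support_subset hnil x C3.start_mem_support,
      hC3c.support_subset hnil y C3.end_mem_support⟩
  have hPdist := hshallow.1
  have hcut : CShortcut G c Pxy := ⟨by omega, by omega, by omega⟩
  have hbad := hC.not_cGood hC3c (by omega) hxy hshort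
  rcases hPworst x y Pxy hsetup hcut hbad with h | ⟨h, -⟩ <;> omega
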